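/- Fix a real L > 1. Let Σ′ = U Λ′ Uᵀ, where Λ′ is the d×d diagonal matrix with i-th entry λ′_i = (λ_i − σ²)²/λ_i for 1 ≤ i ≤ q and λ′_i = 0 for q < i ≤ d, and set B = I_d + W Wᵀ (L·Σ − W Wᵀ)⁻¹. Then tr(Bᵀ Σ⁻¹ B Σ′) − tr(Σ⁻¹ Σ′) = Σ_{i=1}^{q} [ (1 + (λ_i − σ²)/((L−1)·λ_i + σ²))² − 1 ] · λ′_i / λ_i. (This is twice the excess risk incurred by the optimal on-manifold perturbation of generative adversarial examples at the true parameters.) -/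

import Mathlib

open Matrix

/-!
Everything is diagonal in the eigenbasis `U` of `Σ`: `W Wᵀ = U diag(m) Uᵀ` with
`m_i = λ_i − σ²` for `i ≤ q` and `m_i = 0` otherwise, hence `B = U diag(b) Uᵀ` with
`b_i = 1 + m_i / (L λ_i − m_i)`, and both traces become sums of eigenvalue ratios.
Since `λ′_i = 0` for `i > q`, only the first `q` terms survive.
-/

namespace Matrix

variable {n : Type*} [Fintype n] [DecidableEq n]

section CommRing

variable {R : Type*} [CommRing R] {U : Matrix n n R}

theorem conj_diagonal_mul_conj_diagonal (hU : Uᵀ * U = 1) (a b : n → R) :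
    U * diagonal a * Uᵀ * (U * diagonal b * Uᵀ) = U * diagonal (a * b) * Uᵀ := by
  calc U * diagonal a * Uᵀ * (U * diagonal b * Uᵀ)
      = U * (diagonal a * (Uᵀ * U) * diagonal b) * Uᵀ := by simp only [Matrix.mul_assoc]
    _ = U * diagonal (a * b) * Uᵀ := by
      rw [hU, Matrix.mul_one, diagonal_mul_diagonal]
      rfl

theorem conj_diagonal_one (hU : Uᵀ * U = 1) : U * diagonal 1 * Uᵀ = 1 := by
  rw [show diagonal (1 : n → R) = 1 from diagonal_one, Matrix.mul_one, mul_eq_one_comm.mp hU]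

theorem transpose_conj_diagonal (a : n → R) :
    (U * diagonal a * Uᵀ)ᵀ = U * diagonal a * Uᵀ := by
  rw [transpose_mul, transpose_mul, transpose_transpose, diagonal_transpose, Matrix.mul_assoc]

theorem trace_conj_diagonal (hU : Uᵀ * U = 1) (a : n → R) :
    trace (U * diagonal a * Uᵀ) = ∑ i, a i := by
  rw [trace_mul_cycle, hU, Matrix.one_mul, trace_diagonal]

theorem submatrix_mul_diagonal_mul_transpose {m : Type*} [Fintype m] [DecidableEq m]
    (U : Matrix n n R) {e : m → n} (he : Function.Injective e) (c : m → R) :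
    U.submatrix id e * diagonal c * (U.submatrix id e)ᵀ =
      U * diagonal (Function.extend e c 0) * Uᵀ := by
  ext i k
  simp only [mul_apply, diagonal_apply, mul_ite, mul_zero, Finset.sum_ite_eq',
    Finset.mem_univ, if_true, transpose_apply, submatrix_apply, id]
  refine Fintype.sum_of_injective e he _ _ (fun x hx => ?_) (fun x => by rw [he.extend_apply])
  rw [Function.extend_apply' _ _ _ (by simpa using hx), Pi.zero_apply, mul_zero, zero_mul]

theorem submatrix_mul_diagonal_mul_transpose_self {m : Type*} [Fintype m] [DecidableEq m]
    (U : Matrix n n R) {e : m → n} (he : Function.Injective e) (s : m → R) :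
    U.submatrix id e * diagonal s * (U.submatrix id e * diagonal s)ᵀ =
      U * diagonal (Function.extend e (s * s) 0) * Uᵀ := by
  rw [transpose_mul, diagonal_transpose, ← Matrix.mul_assoc, Matrix.mul_assoc (U.submatrix id e),
    diagonal_mul_diagonal, submatrix_mul_diagonal_mul_transpose U he]
  rfl

end CommRing

section Field

variable {K : Type*} [Field K] {U : Matrix n n K}

theorem inv_conj_diagonal (hU : Uᵀ * U = 1) {a : n → K} (ha : ∀ i, a i ≠ 0) :
    (U * diagonal a * Uᵀ)⁻¹ = U * diagonal a⁻¹ * Uᵀ := by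
  apply inv_eq_right_inv
  rw [conj_diagonal_mul_conj_diagonal hU,
    show a * a⁻¹ = 1 from funext fun i => mul_inv_cancel₀ (ha i), conj_diagonal_one hU]

theorem one_add_conj_diagonal_mul_inv_smul_sub (hU : Uᵀ * U = 1) (L : K) {lam m : n → K}
    (hr : ∀ i, L * lam i - m i ≠ 0) :
    1 + U * diagonal m * Uᵀ * (L • (U * diagonal lam * Uᵀ) - U * diagonal m * Uᵀ)⁻¹ =
      U * diagonal (fun i => 1 + m i / (L * lam i - m i)) * Uᵀ := by
  have hres : L • (U * diagonal lam * Uᵀ) - U * diagonal m * Uᵀ =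
      U * diagonal (fun i => L * lam i - m i) * Uᵀ := by
    rw [← smul_mul_assoc, ← mul_smul_comm, ← diagonal_smul, ← Matrix.sub_mul, ← Matrix.mul_sub,
      diagonal_sub]
    rfl
  rw [hres, inv_conj_diagonal hU hr, conj_diagonal_mul_conj_diagonal hU, ← conj_diagonal_one hU,
    ← Matrix.add_mul, ← Matrix.mul_add, diagonal_add]
  simp only [Pi.mul_apply, Pi.inv_apply, Pi.one_apply, div_eq_mul_inv]

theorem trace_excess_conj_diagonal (hU : Uᵀ * U = 1) (b : n → K) {lam : n → K}
    (hlam : ∀ i, lam i ≠ 0) (lam' : n → K) :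
    trace ((U * diagonal b * Uᵀ)ᵀ * (U * diagonal lam * Uᵀ)⁻¹ * (U * diagonal b * Uᵀ) *
        (U * diagonal lam' * Uᵀ)) - trace ((U * diagonal lam * Uᵀ)⁻¹ * (U * diagonal lam' * Uᵀ)) =
      ∑ i, (b i ^ 2 - 1) * lam' i / lam i := by
  simp only [transpose_conj_diagonal, inv_conj_diagonal hU hlam,
    conj_diagonal_mul_conj_diagonal hU, trace_conj_diagonal hU, ← Finset.sum_sub_distrib]
  refine Finset.sum_congr rfl fun i _ => ?_
  simp only [Pi.mul_apply, Pi.inv_apply]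
  ring

end Field

end Matrix

/-- Twice the excess risk of the optimal generative (on-manifold) perturbation at the
true parameters: with `Σ′ = U Λ′ Uᵀ`, `λ′_i = (λ_i − σ²)²/λ_i` for `i ≤ q`, `0` otherwise,
and `B = I_d + W Wᵀ (L Σ − W Wᵀ)⁻¹`,
`tr(Bᵀ Σ⁻¹ B Σ′) − tr(Σ⁻¹ Σ′) = ∑_{i=1}^q [(1 + (λ_i − σ²)/((L−1)λ_i + σ²))² − 1] λ′_i/λ_i`. -/
theorem generative_excess_risk_trace
    (d q : ℕ) (hq1 : 1 ≤ q) (hqd : q ≤ d)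
    (U : Matrix (Fin d) (Fin d) ℝ)
    (hU : U * Uᵀ = 1 ∧ Uᵀ * U = 1)
    (lam : Fin d → ℝ)
    (hlam_pos : ∀ i, 0 < lam i)
    (hlam_anti : ∀ i j : Fin d, i ≤ j → lam j ≤ lam i)
    (σ2 : ℝ) (hσ2_nonneg : 0 ≤ σ2)
    (hσ2_lt : σ2 < lam ⟨q - 1, by omega⟩)
    (Sig : Matrix (Fin d) (Fin d) ℝ)
    (hSig : Sig = U * diagonal lam * Uᵀ)
    (Uq : Matrix (Fin d) (Fin q) ℝ)
    (hUq : ∀ i j, Uq i j = U i (Fin.castLE hqd j))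
    (W : Matrix (Fin d) (Fin q) ℝ)
    (hW : W = Uq * diagonal (fun j : Fin q => Real.sqrt (lam (Fin.castLE hqd j) - σ2)))
    (L : ℝ) (hL : 1 < L)
    (lam' : Fin d → ℝ)
    (hlam' : ∀ i : Fin d, lam' i = if (i : ℕ) < q then (lam i - σ2) ^ 2 / lam i else 0)
    (Sig' : Matrix (Fin d) (Fin d) ℝ)
    (hSig' : Sig' = U * diagonal lam' * Uᵀ)
    (B : Matrix (Fin d) (Fin d) ℝ)
    (hB : B = 1 + W * Wᵀ * (L • Sig - W * Wᵀ)⁻¹) :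
    trace (Bᵀ * Sig⁻¹ * B * Sig') - trace (Sig⁻¹ * Sig') =
      ∑ j : Fin q,
        ((1 + (lam (Fin.castLE hqd j) - σ2) / ((L - 1) * lam (Fin.castLE hqd j) + σ2)) ^ 2 - 1) *
          lam' (Fin.castLE hqd j) / lam (Fin.castLE hqd j) := by
  obtain ⟨-, hU⟩ := hU
  set e : Fin q → Fin d := Fin.castLE hqd
  have he : Function.Injective e := Fin.castLE_injective hqd
  set m : Fin d → ℝ := Function.extend e (fun j => lam (e j) - σ2) 0 with hm
  have hσ2_le (j : Fin q) : σ2 ≤ lam (e j) :=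
    hσ2_lt.le.trans (hlam_anti _ _ (Fin.le_def.mpr (by simp only [e, Fin.val_castLE]; omega)))
  have hsq : (fun j => √(lam (e j) - σ2)) * (fun j => √(lam (e j) - σ2)) =
      fun j => lam (e j) - σ2 :=
    funext fun j => Real.mul_self_sqrt (sub_nonneg.mpr (hσ2_le j))
  have hWWt : W * Wᵀ = U * diagonal m * Uᵀ := by
    rw [hW, show Uq = U.submatrix id e from Matrix.ext hUq,
      submatrix_mul_diagonal_mul_transpose_self U he, hsq]
  have hm_lt (i : Fin d) : m i < L * lam i := by
    have hlam_lt : lam i < L * lam i := lt_mul_left (hlam_pos i) hL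
    by_cases hi : ∃ j, e j = i
    · obtain ⟨j, rfl⟩ := hi
      rw [hm, he.extend_apply]
      linarith
    · rw [hm, Function.extend_apply' _ _ _ hi, Pi.zero_apply]
      linarith [hlam_pos i]
  rw [hB, hWWt, hSig, hSig',
    one_add_conj_diagonal_mul_inv_smul_sub hU L fun i => (sub_pos.2 (hm_lt i)).ne',
    trace_excess_conj_diagonal hU _ fun i => (hlam_pos i).ne']
  symm
  refine Fintype.sum_of_injective e he _ _ (fun i hi => ?_) fun j => ?_
  · have hiq : ¬(i : ℕ) < q := fun h => hi ⟨⟨i, h⟩, rfl⟩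
    simp [hlam' i, hiq]
  · rw [hm, he.extend_apply,
      show L * lam (e j) - (lam (e j) - σ2) = (L - 1) * lam (e j) + σ2 by ring]
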